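/- arXiv:2308.07294 — 5 statements merged into one kernel-verified Lean document; each statement's English description precedes it below -/
import Mathlib

section
/- For any EL TBox T and any GCI C ⊑ D over concept names and roles, T ⊨ C ⊑ D if and only if T ∪ {D ⊑ B*} ⊨ C ⊑ B*, where B* is a fresh concept name not occurring in T, C, or D. -/
/-! Basic syntax and semantics of the description logic EL_⊥. -/

/-- EL_⊥ concepts over concept names `C` and role names `R`. -/
inductive ELConcept (C R : Type) : Type
  | top  : ELConcept C R
  | bot  : ELConcept C R
  | atom : C → ELConcept C R
  | conj : ELConcept C R → ELConcept C R → ELConcept C R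
  | ex   : R → ELConcept C R → ELConcept C R

/-- A general concept inclusion (GCI) `C ⊑ D`. -/
abbrev GCI (C R : Type) := ELConcept C R × ELConcept C R

/-- A TBox is a set of GCIs. -/
abbrev TBox (C R : Type) := Set (GCI C R)

/-- ABox assertions: concept assertions `C(a)` and role assertions `r(a,b)`. -/
inductive Assertion (C R Ind : Type) : Type
  | concept : ELConcept C R → Ind → Assertion C R Ind
  | role    : R → Ind → Ind → Assertion C R Ind

/-- An ABox is a set of assertions. -/
abbrev ABox (C R Ind : Type) := Set (Assertion C R Ind)

/-- An interpretation with domain `δ`, interpreting concept names, role names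
and individual names. -/
structure Interp (C R Ind δ : Type) where
  atomI : C → Set δ
  roleI : R → Set (δ × δ)
  indI  : Ind → δ

/-- Semantics of concepts. -/
def Interp.sem {C R Ind δ : Type} (I : Interp C R Ind δ) : ELConcept C R → Set δ
  | .top => Set.univ
  | .bot => ∅
  | .atom A => I.atomI A
  | .conj c d => I.sem c ∩ I.sem d
  | .ex r c => {x | ∃ y, (x, y) ∈ I.roleI r ∧ y ∈ I.sem c}

/-- `I` satisfies a GCI `C ⊑ D` iff `C^I ⊆ D^I`. -/
def Interp.satGCI {C R Ind δ : Type} (I : Interp C R Ind δ) (g : GCI C R) : Prop :=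
  I.sem g.1 ⊆ I.sem g.2

/-- `I` is a model of a TBox. -/
def Interp.modelT {C R Ind δ : Type} (I : Interp C R Ind δ) (T : TBox C R) : Prop :=
  ∀ g ∈ T, I.satGCI g

/-- `I` satisfies an assertion. -/
def Interp.satA {C R Ind δ : Type} (I : Interp C R Ind δ) : Assertion C R Ind → Prop
  | .concept c a => I.indI a ∈ I.sem c
  | .role r a b => (I.indI a, I.indI b) ∈ I.roleI r

/-- `I` is a model of an ABox. -/
def Interp.modelA {C R Ind δ : Type} (I : Interp C R Ind δ) (A : ABox C R Ind) : Prop :=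
  ∀ ax ∈ A, I.satA ax

/-- `I` is a model of the ontology `O = A ∪ T`. -/
def Interp.modelO {C R Ind δ : Type} (I : Interp C R Ind δ) (A : ABox C R Ind)
    (T : TBox C R) : Prop :=
  I.modelA A ∧ I.modelT T

/-- TBox entailment of a GCI: every model of `T` satisfies the GCI. -/
def entailsT {C R : Type} (T : TBox C R) (g : GCI C R) : Prop :=
  ∀ (Ind δ : Type) (I : Interp C R Ind δ), I.modelT T → I.satGCI g

/-- The ontology `A ∪ T` is consistent iff it has a model. -/
def consistentO {C R Ind : Type} (A : ABox C R Ind) (T : TBox C R) : Prop :=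
  ∃ (δ : Type) (I : Interp C R Ind δ), I.modelO A T

/-- Entailment of an assertion from an ontology `A ∪ T`. -/
def entailsO {C R Ind : Type} (A : ABox C R Ind) (T : TBox C R)
    (ax : Assertion C R Ind) : Prop :=
  ∀ (δ : Type) (I : Interp C R Ind δ), I.modelO A T → I.satA ax

/-- Occurrence of a concept name in a concept. -/
def occursName {C R : Type} (B : C) : ELConcept C R → Prop
  | .atom A => A = B
  | .conj c d => occursName B c ∨ occursName B d
  | .ex _ c => occursName B c
  | _ => False

/-- Occurrence of a concept name in a TBox. -/
def occursNameT {C R : Type} (B : C) (T : TBox C R) : Prop :=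
  ∃ g ∈ T, occursName B g.1 ∨ occursName B g.2

/-- A concept is ⊥-free (i.e. an EL concept). -/
def botFree {C R : Type} : ELConcept C R → Prop
  | .bot => False
  | .conj c d => botFree c ∧ botFree d
  | .ex _ c => botFree c
  | _ => True

/-- The top-level conjuncts `At(D)` of a concept `D`: the conjuncts of `D`
if `D` is a conjunction, and `{D}` otherwise. -/
def At {C R : Type} : ELConcept C R → Set (ELConcept C R)
  | .conj c d => At c ∪ At d
  | c => {c}

/-- A concept that is a concept name or `⊤`. -/
def atomicOrTop {C R : Type} (c : ELConcept C R) : Prop :=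
  c = ELConcept.top ∨ ∃ A, c = ELConcept.atom A

/-- A basic concept: a concept name, `⊤`, or `⊥`. -/
def isBasic {C R : Type} (c : ELConcept C R) : Prop :=
  c = ELConcept.top ∨ c = ELConcept.bot ∨ ∃ A, c = ELConcept.atom A

/-- Axioms of a normalized EL_⊥ TBox: `A ⊑ B`, `A₁ ⊓ A₂ ⊑ B`, `∃r.A ⊑ B`,
or `A ⊑ ∃r.B`, with `A, A₁, A₂, B` concept names, `⊤`, or `⊥`. -/
def normalizedAxiom {C R : Type} (g : GCI C R) : Prop :=
  (isBasic g.1 ∧ isBasic g.2) ∨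
  (∃ A1 A2, isBasic A1 ∧ isBasic A2 ∧ g.1 = ELConcept.conj A1 A2 ∧ isBasic g.2) ∨
  (∃ r A, isBasic A ∧ g.1 = ELConcept.ex r A ∧ isBasic g.2) ∨
  (∃ r B, isBasic B ∧ g.2 = ELConcept.ex r B ∧ isBasic g.1)

/-- A normalized TBox. -/
def normalized {C R : Type} (T : TBox C R) : Prop :=
  ∀ g ∈ T, normalizedAxiom g

/-- The left-hand side `L` of a TBox axiom is witnessed at `a` in `A`. -/
def witnessed {C R Ind : Type} (A : ABox C R Ind) (L : ELConcept C R) (a : Ind) : Prop :=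
  Assertion.concept L a ∈ A ∨
  ∃ c d, L = ELConcept.conj c d ∧ Assertion.concept c a ∈ A ∧ Assertion.concept d a ∈ A

/-- An assertion mentions the individual `d`. -/
def Assertion.mentions {C R Ind : Type} (d : Ind) : Assertion C R Ind → Prop
  | .concept _ a => a = d
  | .role _ a b => a = d ∨ b = d

/-- The individual `d` occurs in the ABox `A`. -/
def mentionsA {C R Ind : Type} (d : Ind) (A : ABox C R Ind) : Prop :=
  ∃ ax ∈ A, ax.mentions d

/-- The expansion rules other than the ∃₂-rule: the ⊓-rule, the ∃₁-rule and
the ⊑-rule. -/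
inductive StepCore {C R Ind : Type} (T : TBox C R) : ABox C R Ind → ABox C R Ind → Prop
  | conjRule {A : ABox C R Ind} {D c : ELConcept C R} {a : Ind} :
      Assertion.concept D a ∈ A → c ∈ At D → Assertion.concept c a ∉ A →
      StepCore T A (insert (Assertion.concept c a) A)
  | ex1 {A : ABox C R Ind} {r : R} {a b : Ind} {B : ELConcept C R} :
      Assertion.role r a b ∈ A → Assertion.concept B b ∈ A → atomicOrTop B →
      Assertion.concept (ELConcept.ex r B) a ∉ A →
      StepCore T A (insert (Assertion.concept (ELConcept.ex r B) a) A)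
  | sub {A : ABox C R Ind} {g : GCI C R} {a : Ind} :
      g ∈ T → witnessed A g.1 a → Assertion.concept g.2 a ∉ A →
      StepCore T A (insert (Assertion.concept g.2 a) A)

/-- The ∃₂-rule, parameterized by a guard `good` describing when an existing
individual may be reused as a successor. A fresh individual is introduced
only if no existing individual can be reused. -/
inductive StepEx {C R Ind : Type} (good : ABox C R Ind → Prop) :
    ABox C R Ind → ABox C R Ind → Prop
  | reuse {A : ABox C R Ind} {r : R} {a c : Ind} {E : ELConcept C R} :
      Assertion.concept (ELConcept.ex r E) a ∈ A →
      (¬ ∃ b, Assertion.role r a b ∈ A ∧ Assertion.concept E b ∈ A) →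
      good (insert (Assertion.role r a c) (insert (Assertion.concept E c) A)) →
      StepEx good A (insert (Assertion.role r a c) (insert (Assertion.concept E c) A))
  | fresh {A : ABox C R Ind} {r : R} {a d : Ind} {E : ELConcept C R} :
      Assertion.concept (ELConcept.ex r E) a ∈ A →
      (¬ ∃ b, Assertion.role r a b ∈ A ∧ Assertion.concept E b ∈ A) →
      (¬ ∃ c, good (insert (Assertion.role r a c) (insert (Assertion.concept E c) A))) →
      ¬ mentionsA d A →
      StepEx good A (insert (Assertion.role r a d) (insert (Assertion.concept E d)
        (insert (Assertion.concept ELConcept.top d) A)))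

/-- One application of any expansion rule. -/
def Step {C R Ind : Type} (T : TBox C R) (good : ABox C R Ind → Prop)
    (A A' : ABox C R Ind) : Prop :=
  StepCore T A A' ∨ StepEx good A A'

/-- One application of an expansion rule under the strategy that the ∃₂-rule
is applied only when no other rule is applicable. -/
def StepPr {C R Ind : Type} (T : TBox C R) (good : ABox C R Ind → Prop)
    (A A' : ABox C R Ind) : Prop :=
  StepCore T A A' ∨ ((¬ ∃ B, StepCore T A B) ∧ StepEx good A A')

/-- An ABox is complete if no expansion rule is applicable. -/
def completeA {C R Ind : Type} (T : TBox C R) (good : ABox C R Ind → Prop)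
    (A' : ABox C R Ind) : Prop :=
  ¬ ∃ A'', Step T good A' A''

/-- An ABox is clash-free if it contains no assertion `⊥(a)`. -/
def clashFree {C R Ind : Type} (A' : ABox C R Ind) : Prop :=
  ∀ a, Assertion.concept ELConcept.bot a ∉ A'

/-- The interpretation induced from an ABox: `a^I = a`,
`A^I = {a | A(a) ∈ A'}`, `r^I = {(a,b) | r(a,b) ∈ A'}`. -/
def induced {C R Ind : Type} (A' : ABox C R Ind) : Interp C R Ind Ind where
  atomI := fun B => {a | Assertion.concept (ELConcept.atom B) a ∈ A'}
  roleI := fun r => {p | Assertion.role r p.1 p.2 ∈ A'}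
  indI := id


/-!
`T ⊨ C ⊑ D` and `D ⊑ B*` give `C ⊑ B*` by transitivity. Conversely, take a model `I` of
`T` and reinterpret the fresh name `B*` as `D^I`. Freshness leaves `T`, `C` and `D` untouched,
so the new interpretation is a model of `T ∪ {D ⊑ B*}` with the same `C^I`, whence
`C^I ⊆ B*^I = D^I`.
-/

namespace Interp

variable {C R Ind δ : Type}

theorem modelT_insert_iff (I : Interp C R Ind δ) (g : GCI C R) (T : TBox C R) :
    I.modelT (insert g T) ↔ I.satGCI g ∧ I.modelT T :=
  Set.forall_mem_insert

variable [DecidableEq C]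

def updateAtom (I : Interp C R Ind δ) (B : C) (S : Set δ) : Interp C R Ind δ :=
  { I with atomI := Function.update I.atomI B S }

@[simp]
theorem sem_updateAtom_atom_self (I : Interp C R Ind δ) (B : C) (S : Set δ) :
    (I.updateAtom B S).sem (.atom B) = S :=
  Function.update_self _ _ _

theorem sem_updateAtom_of_not_occursName (I : Interp C R Ind δ) (B : C) (S : Set δ)
    {E : ELConcept C R} (h : ¬ occursName B E) : (I.updateAtom B S).sem E = I.sem E := by
  induction E with
  | top | bot => rfl
  | atom A => exact Function.update_of_ne h _ _
  | conj c d ihc ihd =>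
    simp only [occursName, not_or] at h
    simp only [sem, ihc h.1, ihd h.2]
  | ex r c ih =>
    simp only [sem, ih h]
    rfl

theorem modelT_updateAtom_of_not_occursNameT {I : Interp C R Ind δ} {T : TBox C R}
    (hI : I.modelT T) {B : C} (hB : ¬ occursNameT B T) (S : Set δ) :
    (I.updateAtom B S).modelT T := by
  intro g hg
  obtain ⟨h₁, h₂⟩ := not_or.mp fun hocc => hB ⟨g, hg, hocc⟩
  unfold satGCI
  rw [sem_updateAtom_of_not_occursName I B S h₁, sem_updateAtom_of_not_occursName I B S h₂]
  exact hI g hg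

end Interp

theorem stmt0_general {C R : Type} (T : TBox C R) (Cc D : ELConcept C R) (Bstar : C)
    (hfreshT : ¬ occursNameT Bstar T) (hfreshC : ¬ occursName Bstar Cc)
    (hfreshD : ¬ occursName Bstar D) :
    entailsT T (Cc, D) ↔
      entailsT (insert (D, ELConcept.atom Bstar) T) (Cc, ELConcept.atom Bstar) := by
  classical
  constructor
  · intro h Ind δ I hI
    obtain ⟨hDB, hT⟩ := (I.modelT_insert_iff _ T).mp hI
    exact (h Ind δ I hT).trans hDB
  · intro h Ind δ I hT
    set J := I.updateAtom Bstar (I.sem D)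
    have hDB : J.sem D ⊆ J.sem (.atom Bstar) := by
      rw [I.sem_updateAtom_of_not_occursName _ _ hfreshD, I.sem_updateAtom_atom_self]
    have hJ : J.modelT (insert (D, .atom Bstar) T) :=
      (J.modelT_insert_iff _ T).mpr
        ⟨hDB, Interp.modelT_updateAtom_of_not_occursNameT hT hfreshT _⟩
    have hCB : J.sem Cc ⊆ J.sem (.atom Bstar) := h Ind δ J hJ
    rwa [I.sem_updateAtom_of_not_occursName _ _ hfreshC, I.sem_updateAtom_atom_self] at hCB

/-- For any EL TBox `T` and GCI `C ⊑ D`, `T ⊨ C ⊑ D` iff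
`T ∪ {D ⊑ B*} ⊨ C ⊑ B*`, where `B*` is a fresh concept name. -/
theorem stmt0 {C R : Type} (T : TBox C R) (Cc D : ELConcept C R) (Bstar : C)
    (hbfT : ∀ g ∈ T, botFree g.1 ∧ botFree g.2) (hbfC : botFree Cc) (hbfD : botFree D)
    (hfreshT : ¬ occursNameT Bstar T) (hfreshC : ¬ occursName Bstar Cc)
    (hfreshD : ¬ occursName Bstar D) :
    entailsT T (Cc, D) ↔
      entailsT (insert (D, ELConcept.atom Bstar) T) (Cc, ELConcept.atom Bstar) :=
  stmt0_general T Cc D Bstar hfreshT hfreshC hfreshD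
end

section
/- Application of the ⊓-rule preserves consistency: if an EL_⊥ ontology O = A ∪ T is consistent and D(a) ∈ A with C a top-level conjunct of D, then A ∪ {C(a)} ∪ T is consistent. In fact, every model of O is a model of A ∪ {C(a)} ∪ T. -/
theorem Interp.sem_subset_of_mem_At {C R Ind δ : Type} (I : Interp C R Ind δ)
    {c D : ELConcept C R} (hc : c ∈ At D) : I.sem D ⊆ I.sem c := by
  induction D with
  | conj d e ihd ihe =>
    rcases hc with hd | he
    exacts [Set.inter_subset_left.trans (ihd hd), Set.inter_subset_right.trans (ihe he)]
  | _ => rw [hc]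

theorem Interp.modelO.insert_of_mem_At {C R Ind δ : Type} {I : Interp C R Ind δ}
    {A : ABox C R Ind} {T : TBox C R} {D c : ELConcept C R} {a : Ind}
    (hI : I.modelO A T) (hD : Assertion.concept D a ∈ A) (hc : c ∈ At D) :
    I.modelO (insert (Assertion.concept c a) A) T :=
  ⟨Set.forall_insert_of_forall hI.1 (I.sem_subset_of_mem_At hc (hI.1 _ hD)), hI.2⟩

/-- The ⊓-rule preserves consistency; in fact every model of
`O = A ∪ T` is a model of `A ∪ {C(a)} ∪ T`. -/
theorem stmt2 {C R Ind : Type} (A : ABox C R Ind) (T : TBox C R)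
    (D c : ELConcept C R) (a : Ind)
    (hD : Assertion.concept D a ∈ A) (hc : c ∈ At D) :
    (∀ (δ : Type) (I : Interp C R Ind δ), I.modelO A T →
        I.modelO (insert (Assertion.concept c a) A) T) ∧
      (consistentO A T → consistentO (insert (Assertion.concept c a) A) T) :=
  ⟨fun _ _ hI => hI.insert_of_mem_At hD hc,
    fun ⟨δ, I, hI⟩ => ⟨δ, I, hI.insert_of_mem_At hD hc⟩⟩
end

section
/- Each of the four expansion rules (⊓-rule, ∃₁-rule, ∃₂-rule, ⊑-rule) preserves consistency: if O = A ∪ T is a consistent EL_⊥ ontology with normalized TBox T, then the ontology A' ∪ T obtained by one application of any expansion rule is consistent. -/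
/-!
The ⊓-, ∃₁- and ⊑-rules only add assertions that every model of `A ∪ T` already satisfies,
so a model of `A ∪ T` is a model of the expanded ontology. The ∃₂-rule either reuses an
individual `c`, in which case consistency is its guard, or introduces an individual `d` not
occurring in `A`; then a model of `A ∪ T` becomes a model of the expansion by sending `d` to an
`r`-successor in `E` of the interpretation of `a`, which exists since `(∃r.E)(a) ∈ A`.
-/

namespace Interp

variable {C R Ind δ : Type}

theorem sem_subset_of_mem_At_s5 (I : Interp C R Ind δ) {D c : ELConcept C R} (hc : c ∈ At D) :
    I.sem D ⊆ I.sem c := by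
  induction D with
  | conj D₁ D₂ ih₁ ih₂ =>
    rcases hc with hc | hc
    · exact Set.inter_subset_left.trans (ih₁ hc)
    · exact Set.inter_subset_right.trans (ih₂ hc)
  | _ => rw [Set.eq_of_mem_singleton hc]

theorem modelA_insert {I : Interp C R Ind δ} {ax : Assertion C R Ind} {A : ABox C R Ind} :
    I.modelA (insert ax A) ↔ I.satA ax ∧ I.modelA A :=
  Set.forall_mem_insert

theorem satA_of_witnessed {I : Interp C R Ind δ} {A : ABox C R Ind} (hA : I.modelA A)
    {L : ELConcept C R} {a : Ind} (hw : witnessed A L a) : I.satA (.concept L a) := by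
  rcases hw with hL | ⟨c, d, rfl, hc, hd⟩
  · exact hA _ hL
  · exact ⟨hA _ hc, hA _ hd⟩

def updateInd [DecidableEq Ind] (I : Interp C R Ind δ) (d : Ind) (y : δ) : Interp C R Ind δ :=
  { I with indI := Function.update I.indI d y }

variable [DecidableEq Ind]

@[simp]
theorem sem_updateInd (I : Interp C R Ind δ) (d : Ind) (y : δ) (c : ELConcept C R) :
    (I.updateInd d y).sem c = I.sem c := by
  induction c with
  | top | bot | atom => rfl
  | conj c₁ c₂ ih₁ ih₂ => simp only [sem, ih₁, ih₂]
  | ex r c ih => simp only [sem, ih]; rfl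

@[simp]
theorem updateInd_indI (I : Interp C R Ind δ) (d : Ind) (y : δ) :
    (I.updateInd d y).indI = Function.update I.indI d y :=
  rfl

@[simp]
theorem updateInd_roleI (I : Interp C R Ind δ) (d : Ind) (y : δ) :
    (I.updateInd d y).roleI = I.roleI :=
  rfl

theorem satA_updateInd {I : Interp C R Ind δ} {d : Ind} (y : δ) {ax : Assertion C R Ind}
    (hd : ¬ ax.mentions d) : (I.updateInd d y).satA ax ↔ I.satA ax := by
  cases ax with
  | concept c a =>
    have had : a ≠ d := hd
    simp [satA, had]
  | role r a b =>
    obtain ⟨had, hbd⟩ : a ≠ d ∧ b ≠ d := not_or.mp hd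
    simp [satA, had, hbd]

theorem modelA_updateInd {I : Interp C R Ind δ} {d : Ind} (y : δ) {A : ABox C R Ind}
    (hd : ¬ mentionsA d A) (hA : I.modelA A) : (I.updateInd d y).modelA A :=
  fun ax hax => (satA_updateInd y fun h => hd ⟨ax, hax, h⟩).mpr (hA ax hax)

theorem modelT_updateInd {I : Interp C R Ind δ} {T : TBox C R} (d : Ind) (y : δ)
    (hT : I.modelT T) : (I.updateInd d y).modelT T := by
  intro g hg
  simpa only [satGCI, sem_updateInd] using hT g hg

end Interp

open Interp

theorem StepCore.modelO {C R Ind δ : Type} {T : TBox C R} {A A' : ABox C R Ind}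
    {I : Interp C R Ind δ} (hstep : StepCore T A A') (hI : I.modelO A T) : I.modelO A' T := by
  obtain ⟨hA, hT⟩ := hI
  refine ⟨?_, hT⟩
  cases hstep with
  | conjRule hD hc => exact modelA_insert.mpr ⟨I.sem_subset_of_mem_At_s5 hc (hA _ hD), hA⟩
  | ex1 hr hB => exact modelA_insert.mpr ⟨⟨_, hA _ hr, hA _ hB⟩, hA⟩
  | sub hg hw => exact modelA_insert.mpr ⟨hT _ hg (satA_of_witnessed hA hw), hA⟩

theorem consistentO_of_fresh_successor {C R Ind : Type} {T : TBox C R} {A : ABox C R Ind}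
    {r : R} {a d : Ind} {E : ELConcept C R} (hcons : consistentO A T)
    (hE : Assertion.concept (.ex r E) a ∈ A) (hd : ¬ mentionsA d A) :
    consistentO (insert (.role r a d) (insert (.concept E d) (insert (.concept .top d) A))) T := by
  classical
  obtain ⟨δ, I, hA, hT⟩ := hcons
  obtain ⟨y, hay, hyE⟩ := hA _ hE
  have had : a ≠ d := fun h => hd ⟨_, hE, h⟩
  refine ⟨δ, I.updateInd d y, ?_, modelT_updateInd d y hT⟩
  simp only [modelA_insert]
  refine ⟨?_, ?_, trivial, modelA_updateInd y hd hA⟩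
  · simpa [satA, had] using hay
  · simpa [satA] using hyE

theorem stmt5_general {C R Ind : Type} (T : TBox C R) (A A' : ABox C R Ind)
    (hcons : consistentO A T)
    (hstep : Step T (fun B => consistentO B T) A A') :
    consistentO A' T := by
  rcases hstep with hcore | hex
  · obtain ⟨δ, I, hI⟩ := hcons
    exact ⟨δ, I, hcore.modelO hI⟩
  · cases hex with
    | reuse _ _ hgood => exact hgood
    | fresh hE _ _ hd => exact consistentO_of_fresh_successor hcons hE hd

/-- Each expansion rule preserves consistency: if `A ∪ T` is
consistent with `T` normalized, then one application of any expansion rule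
yields a consistent ontology `A' ∪ T`. -/
theorem stmt5 {C R Ind : Type} (T : TBox C R) (A A' : ABox C R Ind)
    (hnorm : normalized T) (hcons : consistentO A T)
    (hstep : Step T (fun B => consistentO B T) A A') :
    consistentO A' T :=
  stmt5_general T A A' hcons hstep
end

section
/- The interpretation I induced from a complete ABox A' satisfies every assertion in A': for every role assertion r(a,b) ∈ A' we have (a^I, b^I) ∈ r^I, and for every concept assertion C(a) ∈ A' we have a^I ∈ C^I. -/
theorem Assertion.finite_setOf_mentions {C R Ind : Type} (ax : Assertion C R Ind) :
    {d | ax.mentions d}.Finite := by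
  cases ax with
  | concept c a => simp [Assertion.mentions]
  | role r a b => simp [Assertion.mentions, Set.ofPred_or]

theorem finite_setOf_mentionsA {C R Ind : Type} {A : ABox C R Ind} (hfin : A.Finite) :
    {d | mentionsA d A}.Finite :=
  (hfin.biUnion fun ax _ => ax.finite_setOf_mentions).subset
    fun _ ⟨_, hax, hd⟩ => Set.mem_biUnion hax hd

theorem clashFree_of_botFree {C R Ind : Type} {A : ABox C R Ind}
    (hbf : ∀ (c : ELConcept C R) (a : Ind), Assertion.concept c a ∈ A → botFree c) :
    clashFree A :=
  fun a hbot => hbf _ a hbot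

namespace completeA

variable {C R Ind : Type} {T : TBox C R} {good : ABox C R Ind → Prop} {A : ABox C R Ind}

theorem concept_mem_of_mem_At (hcomp : completeA T good A) {D e : ELConcept C R} {a : Ind}
    (hD : Assertion.concept D a ∈ A) (he : e ∈ At D) : Assertion.concept e a ∈ A := by
  by_contra hne
  exact hcomp ⟨_, Or.inl (StepCore.conjRule hD he hne)⟩

/-- The ∃₂-rule is never blocked: failing every reusable successor, a fresh individual exists
because `A` is finite and `Ind` is not. -/
theorem exists_role_of_concept_ex [Infinite Ind] (hfin : A.Finite) (hcomp : completeA T good A)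
    {r : R} {E : ELConcept C R} {a : Ind} (hex : Assertion.concept (ELConcept.ex r E) a ∈ A) :
    ∃ b, Assertion.role r a b ∈ A ∧ Assertion.concept E b ∈ A := by
  by_contra hnb
  by_cases hreuse : ∃ c, good (insert (Assertion.role r a c) (insert (Assertion.concept E c) A))
  · obtain ⟨c, hc⟩ := hreuse
    exact hcomp ⟨_, Or.inr (StepEx.reuse hex hnb hc)⟩
  · obtain ⟨d, hd⟩ := (finite_setOf_mentionsA hfin).exists_notMem
    exact hcomp ⟨_, Or.inr (StepEx.fresh hex hnb hreuse hd)⟩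

/-- The induction is over `c` but only its top-level conjuncts are asserted: the ⊓-rule
decomposes `D(a)` into `At D`, not into the two immediate conjuncts of `D`. -/
theorem mem_sem_induced [Infinite Ind] (hfin : A.Finite) (hcomp : completeA T good A)
    (hcf : clashFree A) (c : ELConcept C R) {a : Ind}
    (hc : ∀ e ∈ At c, Assertion.concept e a ∈ A) : a ∈ (induced A).sem c := by
  induction c generalizing a with
  | top => trivial
  | bot => exact hcf a (hc _ rfl)
  | atom B => exact hc _ rfl
  | conj c d ihc ihd =>
    exact ⟨ihc fun e he => hc e (Or.inl he), ihd fun e he => hc e (Or.inr he)⟩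
  | ex r E ih =>
    obtain ⟨b, hrole, hE⟩ := exists_role_of_concept_ex hfin hcomp (hc _ rfl)
    exact ⟨b, hrole, ih fun e he => hcomp.concept_mem_of_mem_At hE he⟩

end completeA

/-- The interpretation induced from a complete ABox `A'`
satisfies every assertion of `A'` (concepts in assertions being EL, i.e.
⊥-free). -/
theorem stmt9 {C R Ind : Type} [Infinite Ind] (T : TBox C R)
    (good : ABox C R Ind → Prop) (A' : ABox C R Ind)
    (hfin : A'.Finite)
    (hbf : ∀ (c : ELConcept C R) (a : Ind), Assertion.concept c a ∈ A' → botFree c)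
    (hcomp : completeA T good A') :
    ∀ ax ∈ A', (induced A').satA ax := by
  rintro (⟨c, a⟩ | ⟨r, a, b⟩) hax
  · exact hcomp.mem_sem_induced hfin (clashFree_of_botFree hbf) c
      fun e he => hcomp.concept_mem_of_mem_At hax he
  · exact hax
end

section
/- Canonical model characterization of non-entailment in EL: for any EL TBox T and GCI η = C ⊑ D, T ⊭ η if and only if the canonical model I_T (extended with an element for C) does not satisfy η. -/
/-- The canonical model of a TBox `T`: one domain element `d_E` per concept
`E`, with `d_E ∈ A^I` iff `T ⊨ E ⊑ A` and `(d_E, d_F) ∈ r^I` iff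
`T ⊨ E ⊑ ∃r.F`. -/
def canInterp {C R : Type} (T : TBox C R) :
    Interp C R (ELConcept C R) (ELConcept C R) where
  atomI := fun A => {E | entailsT T (E, ELConcept.atom A)}
  roleI := fun r => {p | entailsT T (p.1, ELConcept.ex r p.2)}
  indI := id

/-!
For every concept `E`, `d_E ∈ D^{I_T}` iff `T ⊨ E ⊑ D`, by induction on `D`; the inclusion
from left to right holds for all `D`, the converse needs `D` to be ⊥-free. The existential case
works because the filler `F` of `∃r.F` is itself an element `d_F` with `T ⊨ E ⊑ ∃r.F`.
Then `I_T` satisfies every axiom `E ⊑ F` of `T`: `d_G ∈ E^{I_T}` gives `T ⊨ G ⊑ E ⊑ F`,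
hence `d_G ∈ F^{I_T}`.
-/

namespace entailsT

variable {C R : Type} {T : TBox C R}

theorem refl (E : ELConcept C R) : entailsT T (E, E) :=
  fun _ _ _ _ _ hx => hx

theorem trans {E F G : ELConcept C R} (hEF : entailsT T (E, F)) (hFG : entailsT T (F, G)) :
    entailsT T (E, G) :=
  fun Ind δ I hI _ hx => hFG Ind δ I hI (hEF Ind δ I hI hx)

theorem of_mem {E F : ELConcept C R} (h : (E, F) ∈ T) : entailsT T (E, F) :=
  fun _ _ _ hI => hI _ h

theorem top (E : ELConcept C R) : entailsT T (E, .top) :=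
  fun _ _ _ _ _ _ => Set.mem_univ _

theorem conj_iff {E F G : ELConcept C R} :
    entailsT T (E, .conj F G) ↔ entailsT T (E, F) ∧ entailsT T (E, G) :=
  ⟨fun h => ⟨fun Ind δ I hI _ hx => (h Ind δ I hI hx).1, fun Ind δ I hI _ hx => (h Ind δ I hI hx).2⟩,
    fun ⟨hF, hG⟩ Ind δ I hI _ hx => ⟨hF Ind δ I hI hx, hG Ind δ I hI hx⟩⟩

theorem ex_mono {E F G : ELConcept C R} {r : R} (hE : entailsT T (E, .ex r F))
    (hFG : entailsT T (F, G)) : entailsT T (E, .ex r G) := by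
  intro Ind δ I hI x hx
  obtain ⟨y, hxy, hy⟩ := hE Ind δ I hI hx
  exact ⟨y, hxy, hFG Ind δ I hI hy⟩

end entailsT

section canInterp

variable {C R : Type} {T : TBox C R}

theorem entailsT_of_mem_sem_canInterp {D E : ELConcept C R} (h : E ∈ (canInterp T).sem D) :
    entailsT T (E, D) := by
  induction D generalizing E with
  | top => exact entailsT.top E
  | bot => exact absurd h (Set.notMem_empty E)
  | atom A => exact h
  | conj F G ihF ihG => exact entailsT.conj_iff.2 ⟨ihF h.1, ihG h.2⟩
  | ex r F ih =>
    obtain ⟨F', hEF', hF'⟩ := h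
    exact entailsT.ex_mono hEF' (ih hF')

theorem mem_sem_canInterp_of_entailsT {D E : ELConcept C R} (hD : botFree D)
    (h : entailsT T (E, D)) : E ∈ (canInterp T).sem D := by
  induction D generalizing E with
  | top => exact Set.mem_univ E
  | bot => exact hD.elim
  | atom A => exact h
  | conj F G ihF ihG =>
    obtain ⟨hF, hG⟩ := entailsT.conj_iff.1 h
    exact ⟨ihF hD.1 hF, ihG hD.2 hG⟩
  | ex r F ih => exact ⟨F, h, ih hD (entailsT.refl F)⟩

theorem mem_sem_canInterp_iff {D : ELConcept C R} (hD : botFree D) (E : ELConcept C R) :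
    E ∈ (canInterp T).sem D ↔ entailsT T (E, D) :=
  ⟨entailsT_of_mem_sem_canInterp, mem_sem_canInterp_of_entailsT hD⟩

theorem canInterp_modelT (hT : ∀ g ∈ T, botFree g.2) : (canInterp T).modelT T :=
  fun g hg _ hE =>
    mem_sem_canInterp_of_entailsT (hT g hg)
      (entailsT.trans (entailsT_of_mem_sem_canInterp hE) (entailsT.of_mem hg))

end canInterp

/-- Canonical model characterization of non-entailment in EL:
`I_T` is a model of `T`, `d_C ∈ C^{I_T}`, and `T ⊭ C ⊑ D` iff the canonical
model does not satisfy `C ⊑ D` at `d_C`. -/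
theorem stmt16 {C R : Type} (T : TBox C R) (Cc D : ELConcept C R)
    (hbfT : ∀ g ∈ T, botFree g.1 ∧ botFree g.2)
    (hbfC : botFree Cc) (hbfD : botFree D) :
    (canInterp T).modelT T ∧
    Cc ∈ (canInterp T).sem Cc ∧
    (¬ entailsT T (Cc, D) ↔ Cc ∉ (canInterp T).sem D) :=
  ⟨canInterp_modelT fun g hg => (hbfT g hg).2,
    mem_sem_canInterp_of_entailsT hbfC (entailsT.refl Cc),
    (mem_sem_canInterp_iff hbfD Cc).not.symm⟩
end
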